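/- Let G be a finite group, A a normal abelian subgroup, and H a π-Hall subgroup of G with G = HA. Then H is pronormal in G. -/

import Mathlib

open Pointwise

/-- `conjSub H g` is the conjugate subgroup `H^g = g⁻¹Hg`. -/
def conjSub {G : Type*} [Group G] (H : Subgroup G) (g : G) : Subgroup G :=
  MulAut.conj g⁻¹ • H

/-- `H` is pronormal: for every `g`, `H` and `H^g` are conjugate in `⟨H, H^g⟩`. -/
def IsPronormal {G : Type*} [Group G] (H : Subgroup G) : Prop :=
  ∀ g : G, ∃ x ∈ H ⊔ conjSub H g, conjSub H x = conjSub H g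


/-- `H` is a `π`-Hall subgroup: `|H|` is a `π`-number and its index a `π'`-number. -/
def IsPiHall {G : Type*} [Group G] (π : Set ℕ) (H : Subgroup G) : Prop :=
  (∀ p : ℕ, p.Prime → p ∣ Nat.card H → p ∈ π) ∧
  (∀ p : ℕ, p.Prime → p ∣ H.index → p ∉ π)

/-!
Write `g = h a` with `h ∈ H` and `a ∈ A`, so that `H^g = H^a`. Averaging `a` over its `H`-conjugates
in the abelian group `A` gives `∏_{h ∈ H} h a h⁻¹ = a^{|H|} ∏_{h ∈ H} a⁻¹ h a h⁻¹`, where the left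
side centralizes `H` and every factor `a⁻¹ h a h⁻¹` lies in `⟨H, H^a⟩`. Hence `a^{|H|}` lies in
`M = C_A(H) · (A ∩ ⟨H, H^a⟩)`, a subgroup of `A` containing `A ∩ H`, so its index divides
`|A : A ∩ H| = |G : H|`, which is prime to `|H|`. Therefore `a = c u` with `c ∈ C_A(H)` and
`u ∈ ⟨H, H^a⟩`, and `H^a = H^u`.
-/

namespace Subgroup

variable {G : Type*} [Group G]

theorem relIndex_eq_index_of_sup_eq_top {H A : Subgroup G} [A.Normal] [A.FiniteIndex]
    (hHA : H ⊔ A = ⊤) : H.relIndex A = H.index := by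
  have key : A.index * H.index = H.relIndex A * A.index := by
    calc A.index * H.index = (H ⊓ A).relIndex H * H.relIndex ⊤ := by
          rw [inf_relIndex_left, ← relIndex_sup_right, hHA, relIndex_top_right, relIndex_top_right]
      _ = (H ⊓ A).relIndex A * A.relIndex ⊤ := by
          rw [relIndex_mul_relIndex _ _ _ inf_le_left le_top,
            relIndex_mul_relIndex _ _ _ inf_le_right le_top]
      _ = H.relIndex A * A.index := by rw [inf_relIndex_right, relIndex_top_right]
  rw [mul_comm] at key
  exact (Nat.eq_of_mul_eq_mul_right (Nat.pos_of_ne_zero FiniteIndex.index_ne_zero) key).symm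

theorem mem_of_pow_mem_of_coprime_index {M : Subgroup G} [M.Normal] {x : G} {n : ℕ}
    (hn : n.Coprime M.index) (hx : x ^ n ∈ M) : x ∈ M := by
  rw [← QuotientGroup.eq_one_iff, QuotientGroup.mk_pow] at hx
  rw [← QuotientGroup.eq_one_iff, ← orderOf_eq_one_iff]
  exact Nat.eq_one_of_dvd_coprimes hn (orderOf_dvd_of_pow_eq_one hx) (_root_.orderOf_dvd_natCard _)

end Subgroup

theorem IsPiHall.coprime_card_index {G : Type*} [Group G] {π : Set ℕ} {H : Subgroup G}
    (hH : IsPiHall π H) : (Nat.card H).Coprime H.index :=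
  Nat.coprime_of_dvd fun p hp hpH hpi => hH.2 p hp hpi (hH.1 p hp hpH)

section conjSub

variable {G : Type*} [Group G] {H : Subgroup G}

theorem mem_conjSub {g x : G} : x ∈ conjSub H g ↔ g * x * g⁻¹ ∈ H := by
  rw [conjSub, Subgroup.mem_pointwise_smul_iff_inv_smul_mem]
  simp [MulAut.smul_def, mul_assoc]

theorem conjSub_mul (x y : G) : conjSub H (x * y) = conjSub (conjSub H x) y := by
  ext z
  simp only [mem_conjSub, mul_inv_rev, mul_assoc]

theorem conjSub_eq_self_of_mem_normalizer {g : G} (hg : g ∈ Subgroup.normalizer (H : Set G)) :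
    conjSub H g = H := by
  ext x
  rw [mem_conjSub]
  exact (hg x).symm

theorem inv_mul_conjNormal_mem_sup_conjSub {A : Subgroup G} [A.Normal] {h : G} (hh : h ∈ H)
    (x : A) :
    ((x⁻¹ * MulAut.conjNormal h x : A) : G) ∈ H ⊔ conjSub H x := by
  have hconj : (x : G)⁻¹ * h * x ∈ conjSub H x := by
    rw [mem_conjSub]
    simpa [mul_assoc] using hh
  have hcoe : ((x⁻¹ * MulAut.conjNormal h x : A) : G) = ((x : G)⁻¹ * h * x) * h⁻¹ := by
    rw [Subgroup.coe_mul, MulAut.conjNormal_apply, Subgroup.coe_inv]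
    group
  rw [hcoe]
  exact mul_mem (Subgroup.mem_sup_right hconj) (Subgroup.mem_sup_left (inv_mem hh))

end conjSub

open scoped IsMulCommutative

section Averaging

open Subgroup

variable {G : Type*} [Group G] {A : Subgroup G} [A.Normal] [IsMulCommutative A]
  (H : Subgroup G) [Fintype H]

def conjNorm (x : A) : A := ∏ h : H, MulAut.conjNormal (h : G) x

theorem conjNormal_conjNorm {k : G} (hk : k ∈ H) (x : A) :
    MulAut.conjNormal k (conjNorm H x) = conjNorm H x := by
  simp only [conjNorm, map_prod, ← MulAut.mul_apply, ← map_mul]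
  exact Equiv.prod_comp (Equiv.mulLeft (⟨k, hk⟩ : H)) fun h : H => MulAut.conjNormal (h : G) x

theorem conjNorm_mem_centralizer (x : A) :
    (conjNorm H x : G) ∈ centralizer (H : Set G) := by
  rw [mem_centralizer_iff]
  intro k hk
  have hfix := congrArg Subtype.val (conjNormal_conjNorm H hk x)
  rw [MulAut.conjNormal_apply] at hfix
  exact mul_inv_eq_iff_eq_mul.mp hfix

theorem conjNorm_eq_pow_mul (x : A) :
    conjNorm H x = x ^ Nat.card H * ∏ h : H, x⁻¹ * MulAut.conjNormal (h : G) x := by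
  rw [Finset.prod_mul_distrib, Finset.prod_const, Finset.card_univ, ← Nat.card_eq_fintype_card,
    ← mul_assoc, ← mul_pow, mul_inv_cancel, one_pow, one_mul, conjNorm]

theorem pow_card_mem_centralizer_sup (x : A) :
    x ^ Nat.card H ∈ (centralizer (H : Set G)).subgroupOf A ⊔
      (H ⊔ conjSub H x).subgroupOf A := by
  rw [eq_mul_inv_of_mul_eq (conjNorm_eq_pow_mul H x).symm]
  refine mul_mem (mem_sup_left ?_) (inv_mem (mem_sup_right ?_))
  · exact mem_subgroupOf.mpr (conjNorm_mem_centralizer H x)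
  · exact prod_mem fun h _ => mem_subgroupOf.mpr (inv_mul_conjNormal_mem_sup_conjSub h.2 x)

theorem exists_mem_sup_conjSub_eq_conjSub [A.FiniteIndex] (hcop : (Nat.card H).Coprime H.index)
    (hHA : H ⊔ A = ⊤) (x : A) : ∃ y ∈ H ⊔ conjSub H x, conjSub H y = conjSub H x := by
  set M := (centralizer (H : Set G)).subgroupOf A ⊔ (H ⊔ conjSub H x).subgroupOf A
  have hHM : H.subgroupOf A ≤ M := fun h hh => mem_sup_right
    (mem_subgroupOf.mpr (mem_sup_left (mem_subgroupOf.mp hh)))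
  have hindex : M.index ∣ H.index :=
    relIndex_eq_index_of_sup_eq_top hHA ▸ index_dvd_of_le hHM
  obtain ⟨c, hc, u, hu, hcu⟩ := mem_sup.mp <| mem_of_pow_mem_of_coprime_index
    (hcop.coprime_dvd_right hindex) (pow_card_mem_centralizer_sup H x)
  refine ⟨u, mem_subgroupOf.mp hu, ?_⟩
  rw [← hcu, coe_mul, conjSub_mul, conjSub_eq_self_of_mem_normalizer
    (centralizer_le_normalizer _ (mem_subgroupOf.mp hc))]

end Averaging

theorem stmt_13 {G : Type*} [Group G] [Finite G] (π : Set ℕ)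
    (A H : Subgroup G) [A.Normal] [IsMulCommutative A]
    (hHall : IsPiHall π H) (hHA : H ⊔ A = ⊤) :
    IsPronormal H := by
  intro g
  have := Fintype.ofFinite H
  obtain ⟨h, hh, a, ha, rfl⟩ : g ∈ (H : Set G) * A := by
    rw [← Subgroup.mul_normal, hHA]
    trivial
  rw [conjSub_mul, conjSub_eq_self_of_mem_normalizer (Subgroup.le_normalizer hh)]
  exact exists_mem_sup_conjSub_eq_conjSub H hHall.coprime_card_index hHA ⟨a, ha⟩
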